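/- Let X = [-1,1]^d and let L be the least squares loss (Y = [-1,1]), the hinge loss, or the classification loss (Y = {-1,1}). Let P be a probability measure on X×Y satisfying Assumption (A) with constant c. Let s ∈ (0,1], r > 0, m ≥ 0, t ∈ [0,r], and let f* = h_A + Σ_{i=1}^m b_i 1_{x_i*+t·B_∞} be a properly aligned inflated histogram, where h_A = Σ_{j∈J} c_j 1_{A_j} with (A_j)_{j∈J} a cubic partition of X of width s and c_j ∈ Y, b_i ∈ 2Y ∪ {0}, x_i* ∈ X; assume f* and h_A take values in [-1,1]. Then R_{L,P}(f*) − R*_{L,P} ≤ (R_{L,P}(h_A) − R*_{L,P}) + m·M·c·r, where M := 8 for the least squares loss, M := 2 for the hinge loss, and M := 1 for the classification loss. -/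

import Mathlib

open MeasureTheory ENNReal Filter Set
open scoped Classical

noncomputable section

namespace Pantry

abbrev E (d : ℕ) := Fin d → ℝ

/-- The input space `X = [-1,1]^d`. -/
def Xcube (d : ℕ) : Set (E d) := Set.Icc (fun _ => -1) (fun _ => 1)

/-- The closed `ℓ^∞`-ball `x + t·B_∞`. -/
def linfBall {d : ℕ} (x : E d) (t : ℝ) : Set (E d) :=
  Set.Icc (fun i => x i - t) (fun i => x i + t)

/-- sign with `sign 0 = 1`. -/
def sgn (t : ℝ) : ℝ := if t < 0 then -1 else 1

/-- Least squares loss. -/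
def Lls (y t : ℝ) : ℝ := (y - t) ^ 2

/-- Hinge loss. -/
def Lhinge (y t : ℝ) : ℝ := max 0 (1 - t * y)

/-- Classification loss. -/
def Lclass (y t : ℝ) : ℝ := if y * sgn t ≤ 0 then 1 else 0

/-- Risk of a predictor. -/
def Risk {d : ℕ} (L : ℝ → ℝ → ℝ) (P : Measure (E d × ℝ)) (f : E d → ℝ) : ℝ :=
  ∫ p, L p.2 (f p.1) ∂P

/-- Bayes risk: infimum of the risk over measurable predictors. -/
def BayesRisk {d : ℕ} (L : ℝ → ℝ → ℝ) (P : Measure (E d × ℝ)) : ℝ :=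
  ⨅ f : {f : E d → ℝ // Measurable f}, Risk L P f.1

/-- Empirical risk. -/
def EmpRisk {d n : ℕ} (L : ℝ → ℝ → ℝ) (D : Fin n → E d × ℝ) (f : E d → ℝ) : ℝ :=
  (1 / (n : ℝ)) * ∑ i, L (D i).2 (f (D i).1)

/-- `f` interpolates the data set `D`. -/
def Interpolates {d n : ℕ} (L : ℝ → ℝ → ℝ) (D : Fin n → E d × ℝ) (f : E d → ℝ) : Prop :=
  EmpRisk L D f = ⨅ g : E d → ℝ, EmpRisk L D g

/-- Assumption (A): `P_X(x + t·B_∞) ≤ c·t`. -/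
def AssumptionA {d : ℕ} (P : Measure (E d × ℝ)) (c : ℝ) : Prop :=
  0 < c ∧ ∀ t : ℝ, 0 ≤ t → ∀ x ∈ Xcube d,
    P.map Prod.fst (linfBall x t) ≤ ENNReal.ofReal (c * t)

/-- The `n`-fold product measure `P^n`. -/
def Pn {d : ℕ} (P : Measure (E d × ℝ)) (n : ℕ) : Measure (Fin n → E d × ℝ) :=
  Measure.pi fun _ => P

/-- `P` is supported on `X × Y`. -/
def SuppXY {d : ℕ} (P : Measure (E d × ℝ)) (Y : Set ℝ) : Prop :=
  ∀ᵐ p ∂P, p.1 ∈ Xcube d ∧ p.2 ∈ Y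

/-- Squared `L²(P_X)`-distance. -/
def L2sq {d : ℕ} (P : Measure (E d × ℝ)) (f g : E d → ℝ) : ℝ :=
  ∫ x, (f x - g x) ^ 2 ∂(P.map Prod.fst)

/-- Lower-left corner of the cell of the cubic partition (offset `off`, width `s`)
containing `x`. -/
def cellLo {d : ℕ} (off : E d) (s : ℝ) (x : E d) : E d :=
  fun i => off i + s * (⌊(x i - off i) / s⌋ : ℝ)

/-- The cell `B(x)` of the cubic partition of width `s` and offset `off` containing `x`. -/
def cell {d : ℕ} (off : E d) (s : ℝ) (x : E d) : Set (E d) :=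
  { z | ∀ i, cellLo off s x i ≤ z i ∧ z i < cellLo off s x i + s }

/-- A function is constant on each cell of the cubic partition. -/
def ConstOnCells {d : ℕ} (off : E d) (s : ℝ) (h : E d → ℝ) : Prop :=
  ∀ x z : E d, z ∈ cell off s x → h z = h x

/-- The hypotheses class `H_A` of `Y`-valued histograms for the cubic partition with
offset `off` and width `s`. -/
def Hist {d : ℕ} (off : E d) (s : ℝ) (Y : Set ℝ) : Set (E d → ℝ) :=
  { h | ConstOnCells off s h ∧ ∀ x, h x ∈ Y }

/-- Indices of data points falling in the cell of `x`. -/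
def dataCell {d n : ℕ} (off : E d) (s : ℝ) (D : Fin n → E d × ℝ) (x : E d) : Finset (Fin n) :=
  Finset.univ.filter (fun i => (D i).1 ∈ cell off s x)

/-- `h` is an empirical histogram rule for regression (HRR): a `[-1,1]`-valued histogram
given by label averages on non-empty cells. -/
def IsHRR {d n : ℕ} (off : E d) (s : ℝ) (D : Fin n → E d × ℝ) (h : E d → ℝ) : Prop :=
  h ∈ Hist off s (Set.Icc (-1 : ℝ) 1) ∧
  ∀ x : E d, 0 < (dataCell off s D x).card →
    h x = (∑ i ∈ dataCell off s D x, (D i).2) / ((dataCell off s D x).card : ℝ)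

/-- `ε`-covering number of a class of functions w.r.t. the sup-norm on `X`. -/
def covNum {d : ℕ} (H : Set (E d → ℝ)) (ε : ℝ) : ℝ :=
  sInf { r : ℝ | ∃ G : Finset (E d → ℝ), r = (G.card : ℝ) ∧
    ∀ h ∈ H, ∃ g ∈ G, ∀ x ∈ Xcube d, |h x - g x| ≤ ε }

/-- `R*_{L_ls,P,H_A}`: the smallest risk over the histogram class. -/
def HistBayes {d : ℕ} (P : Measure (E d × ℝ)) (off : E d) (s : ℝ) : ℝ :=
  ⨅ h : (Hist off s (Set.Icc (-1 : ℝ) 1)), Risk Lls P h.1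

/-- ReLU. -/
def relu (t : ℝ) : ℝ := max 0 t

/-- ReLU networks with two hidden layers of widths `p₁`, `p₂`. -/
def NN2 (d p₁ p₂ : ℕ) : Set (E d → ℝ) :=
  { f | ∃ (A1 : Fin p₁ → E d) (b1 : Fin p₁ → ℝ) (A2 : Fin p₂ → Fin p₁ → ℝ)
        (b2 : Fin p₂ → ℝ) (a : Fin p₂ → ℝ) (b : ℝ),
      f = fun x =>
        (∑ j, a j * relu ((∑ i, A2 j i * relu ((∑ k, A1 i k * x k) + b1 i)) + b2 j)) + b }

/-- ReLU networks with hidden widths given by the list `ks`, input dimension `m`,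
scalar output without final activation. -/
def NNAux : (m : ℕ) → List ℕ → Set ((Fin m → ℝ) → ℝ)
  | m, [] => { f | ∃ (a : Fin m → ℝ) (b : ℝ), f = fun x => (∑ i, a i * x i) + b }
  | m, k :: ks => { f | ∃ (A : Fin k → Fin m → ℝ) (bv : Fin k → ℝ),
      ∃ g ∈ NNAux k ks, f = fun x => g (fun j => relu ((∑ i, A j i * x i) + bv j)) }

/-- The ReLU bump approximating the indicator of `[z1, z2]` with accuracy `ρ`. -/
def bump {d : ℕ} (z1 z2 : E d) (ρ : ℝ) (x : E d) : ℝ :=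
  relu ((∑ i, (1 - relu ((z1 i + ρ - x i) / ρ) - relu ((x i - z2 i + ρ) / ρ))) - (d : ℝ) + 1)

/-- The `ε`-approximate histogram part: each cell indicator replaced by its `ε`-bump,
restricted to the cell. -/
def histEps {d : ℕ} (off : E d) (s ε : ℝ) (cfun : E d → ℝ) (x : E d) : ℝ :=
  cfun x * bump (cellLo off s x) (fun i => cellLo off s x i + s) ε x

/-- Data indices sharing the input `x`. -/
def sameX {d n : ℕ} (D : Fin n → E d × ℝ) (x : E d) : Finset (Fin n) :=
  Finset.univ.filter (fun k => (D k).1 = x)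

/-- The loss `L` is interpolatable for `D`. -/
def Interpolatable {d n : ℕ} (L : ℝ → ℝ → ℝ) (Y : Set ℝ) (D : Fin n → E d × ℝ) : Prop :=
  ∃ f : E d → ℝ, (∀ x ∈ Xcube d, f x ∈ Y) ∧
    ∀ i : Fin n, (∑ k ∈ sameX D (D i).1, L (D k).2 (f (D i).1)) =
      ⨅ c : ℝ, ∑ k ∈ sameX D (D i).1, L (D k).2 c

/-- Empirical risk for a general (input-dependent) loss. -/
def EmpRiskG {γ : Type*} {n : ℕ} (ℓ : γ → ℝ → ℝ → ℝ) (D : Fin n → γ × ℝ) (f : γ → ℝ) : ℝ :=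
  (1 / (n : ℝ)) * ∑ i, ℓ (D i).1 (D i).2 (f (D i).1)

/-- Risk for a general (input-dependent) loss. -/
def RiskG {γ : Type*} [MeasurableSpace γ] (ℓ : γ → ℝ → ℝ → ℝ) (P : Measure (γ × ℝ))
    (f : γ → ℝ) : ℝ :=
  ∫ p, ℓ p.1 p.2 (f p.1) ∂P

/-- Bayes risk for a general loss. -/
def BayesRiskG {γ : Type*} [MeasurableSpace γ] (ℓ : γ → ℝ → ℝ → ℝ)
    (P : Measure (γ × ℝ)) : ℝ :=
  ⨅ f : {f : γ → ℝ // Measurable f}, RiskG ℓ P f.1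

/-- Number of data points in the cell `parts j`. -/
def Nj {γ : Type*} {m n : ℕ} (parts : Fin m → Set γ) (D : Fin n → γ × ℝ) (j : Fin m) : ℕ :=
  (Finset.univ.filter (fun i => (D i).1 ∈ parts j)).card

/-- Sum of labels of data points in the cell `parts j`. -/
def Sj {γ : Type*} {m n : ℕ} (parts : Fin m → Set γ) (D : Fin n → γ × ℝ) (j : Fin m) : ℝ :=
  ∑ i ∈ Finset.univ.filter (fun i => (D i).1 ∈ parts j), (D i).2

/-- Marginal distribution on the input space. -/
def PX {d : ℕ} (P : Measure (E d × ℝ)) : Measure (E d) := P.map Prod.fst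

/-- Infinite-sample histogram `h_{P,A}`. -/
def hPA {d : ℕ} (P : Measure (E d × ℝ)) (off : E d) (s : ℝ) (fstar : E d → ℝ) (x : E d) : ℝ :=
  if PX P (cell off s x) ≠ 0
  then (∫ z in cell off s x, fstar z ∂(PX P)) / (PX P (cell off s x)).toReal
  else 0

/-! The inflated histogram `f` and `h_A` agree outside the union of the `m` boxes
`xs i + t·B_∞`, and by Assumption (A) each box has `P_X`-mass at most `c t ≤ c r`.
Inside a box the loss of `f` is at most `M` (the loss is bounded by `M` on `Y × [-1,1]`)
while the loss of `h_A` is nonnegative, so the risks differ by at most `m M c r`;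
the Bayes risk cancels. -/

structure IsBoundedLoss (L : ℝ → ℝ → ℝ) (Y : Set ℝ) (M : ℝ) : Prop where
  nonneg : ∀ y a, 0 ≤ L y a
  le_bound : ∀ y ∈ Y, ∀ a ∈ Icc (-1 : ℝ) 1, L y a ≤ M
  measurable : Measurable (Function.uncurry L)

theorem isBoundedLoss_ls : IsBoundedLoss Lls (Icc (-1) 1) 8 where
  nonneg _ _ := sq_nonneg _
  le_bound y hy a ha := by
    obtain ⟨hy₁, hy₂⟩ := hy
    obtain ⟨ha₁, ha₂⟩ := ha
    unfold Lls
    nlinarith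
  measurable := by unfold Lls; fun_prop

theorem isBoundedLoss_hinge : IsBoundedLoss Lhinge {-1, 1} 2 where
  nonneg _ _ := le_max_left _ _
  le_bound y hy a ha := by
    obtain ⟨ha₁, ha₂⟩ := ha
    rcases hy with rfl | rfl <;> exact max_le (by norm_num) (by linarith)
  measurable := by unfold Lhinge; fun_prop

theorem measurable_sgn : Measurable sgn :=
  Measurable.ite (measurableSet_lt measurable_id measurable_const) measurable_const
    measurable_const

theorem isBoundedLoss_class : IsBoundedLoss Lclass {-1, 1} 1 where
  nonneg y a := by unfold Lclass; split_ifs <;> norm_num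
  le_bound y _ a _ := by unfold Lclass; split_ifs <;> norm_num
  measurable :=
    Measurable.ite (measurableSet_le (measurable_fst.mul (measurable_sgn.comp measurable_snd))
      measurable_const) measurable_const measurable_const

theorem IsBoundedLoss.bound_nonneg {L : ℝ → ℝ → ℝ} {Y : Set ℝ} {M : ℝ}
    (hL : IsBoundedLoss L Y M) (hY : Y.Nonempty) : 0 ≤ M :=
  let ⟨y, hy⟩ := hY
  (hL.nonneg y 0).trans (hL.le_bound y hy 0 ⟨by norm_num, by norm_num⟩)

section Risk

variable {L : ℝ → ℝ → ℝ} {Y : Set ℝ} {M : ℝ} {d : ℕ} {P : Measure (E d × ℝ)}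

theorem IsBoundedLoss.integrable [IsFiniteMeasure P] (hL : IsBoundedLoss L Y M)
    (hsupp : SuppXY P Y) {f : E d → ℝ} (hf : Measurable f)
    (hfX : ∀ x ∈ Xcube d, f x ∈ Icc (-1 : ℝ) 1) :
    Integrable (fun p : E d × ℝ => L p.2 (f p.1)) P := by
  have hmeas : Measurable fun p : E d × ℝ => L p.2 (f p.1) :=
    hL.measurable.comp (measurable_snd.prodMk (hf.comp measurable_fst))
  refine .of_bound hmeas.aestronglyMeasurable M ?_
  filter_upwards [hsupp] with p hp
  rw [Real.norm_of_nonneg (hL.nonneg _ _)]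
  exact hL.le_bound _ hp.2 _ (hfX p.1 hp.1)

theorem IsBoundedLoss.risk_sub_risk_le [IsFiniteMeasure P] (hL : IsBoundedLoss L Y M)
    (hsupp : SuppXY P Y) {f g : E d → ℝ} (hf : Measurable f) (hg : Measurable g)
    (hfX : ∀ x ∈ Xcube d, f x ∈ Icc (-1 : ℝ) 1)
    (hgX : ∀ x ∈ Xcube d, g x ∈ Icc (-1 : ℝ) 1) {S : Set (E d)} (hS : MeasurableSet S)
    (hfg : EqOn f g Sᶜ) :
    Risk L P f - Risk L P g ≤ M * (PX P).real S := by
  have hS' : MeasurableSet (Prod.fst ⁻¹' S : Set (E d × ℝ)) := measurable_fst hS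
  have hpointwise : ∀ᵐ p ∂P, L p.2 (f p.1) - L p.2 (g p.1) ≤
      (Prod.fst ⁻¹' S).indicator (fun _ => M) p := by
    filter_upwards [hsupp] with p hp
    by_cases hpS : p.1 ∈ S
    · rw [indicator_of_mem (show p ∈ Prod.fst ⁻¹' S from hpS)]
      linarith [hL.le_bound _ hp.2 _ (hfX p.1 hp.1), hL.nonneg p.2 (g p.1)]
    · rw [indicator_of_notMem (show p ∉ Prod.fst ⁻¹' S from hpS), hfg hpS, sub_self]
  calc Risk L P f - Risk L P g = ∫ p, (L p.2 (f p.1) - L p.2 (g p.1)) ∂P :=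
        (integral_sub (hL.integrable hsupp hf hfX) (hL.integrable hsupp hg hgX)).symm
    _ ≤ ∫ p, (Prod.fst ⁻¹' S).indicator (fun _ => M) p ∂P :=
        integral_mono_ae ((hL.integrable hsupp hf hfX).sub (hL.integrable hsupp hg hgX))
          ((integrable_const M).indicator hS') hpointwise
    _ = M * (PX P).real S := by
        rw [integral_indicator_const M hS', smul_eq_mul, mul_comm, PX,
          map_measureReal_apply measurable_fst hS]

end Risk

theorem measurableSet_linfBall {d : ℕ} (x : E d) (t : ℝ) : MeasurableSet (linfBall x t) :=
  measurableSet_Icc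

theorem AssumptionA.measureReal_iUnion_linfBall_le {d : ℕ} {P : Measure (E d × ℝ)} {c : ℝ}
    (hA : AssumptionA P c) {ι : Type*} [Fintype ι] {xs : ι → E d}
    (hxs : ∀ i, xs i ∈ Xcube d) {t : ℝ} (ht : 0 ≤ t) :
    (PX P).real (⋃ i, linfBall (xs i) t) ≤ Fintype.card ι * (c * t) :=
  calc (PX P).real (⋃ i, linfBall (xs i) t) ≤ ∑ i, (PX P).real (linfBall (xs i) t) :=
        measureReal_iUnion_fintype_le _
    _ ≤ ∑ _i : ι, c * t := Finset.sum_le_sum fun i _ =>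
        ENNReal.toReal_le_of_le_ofReal (mul_nonneg hA.1.le ht) (hA.2 t ht (xs i) (hxs i))
    _ = Fintype.card ι * (c * t) := by simp

theorem statement13_general (d m : ℕ) (L : ℝ → ℝ → ℝ) (Y : Set ℝ) (M : ℝ)
    (hLYM : (L = Lls ∧ Y = Set.Icc (-1 : ℝ) 1 ∧ M = 8) ∨
            (L = Lhinge ∧ Y = ({-1, 1} : Set ℝ) ∧ M = 2) ∨
            (L = Lclass ∧ Y = ({-1, 1} : Set ℝ) ∧ M = 1))
    (P : Measure (E d × ℝ)) [IsProbabilityMeasure P] (hsupp : SuppXY P Y)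
    (c : ℝ) (hA : AssumptionA P c)
    (r t : ℝ) (ht : t ∈ Set.Icc 0 r)
    (cfun : E d → ℝ)
    (hcmeas : Measurable cfun)
    (xs : Fin m → E d) (hxs : ∀ i, xs i ∈ Xcube d)
    (b : Fin m → ℝ)
    (hrange : ∀ x ∈ Xcube d,
      (cfun x + ∑ i, b i * (linfBall (xs i) t).indicator 1 x) ∈ Set.Icc (-1 : ℝ) 1 ∧
      cfun x ∈ Set.Icc (-1 : ℝ) 1) :
    Risk L P (fun x => cfun x + ∑ i, b i * (linfBall (xs i) t).indicator 1 x) -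
        BayesRisk L P ≤
      (Risk L P cfun - BayesRisk L P) + m * M * c * r := by
  set f : E d → ℝ := fun x => cfun x + ∑ i, b i * (linfBall (xs i) t).indicator 1 x
  set S : Set (E d) := ⋃ i, linfBall (xs i) t
  have hL : IsBoundedLoss L Y M := by
    rcases hLYM with ⟨rfl, rfl, rfl⟩ | ⟨rfl, rfl, rfl⟩ | ⟨rfl, rfl, rfl⟩
    exacts [isBoundedLoss_ls, isBoundedLoss_hinge, isBoundedLoss_class]
  have hM : 0 ≤ M :=
    let ⟨p, hp⟩ := hsupp.exists
    hL.bound_nonneg ⟨p.2, hp.2⟩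
  have hf : Measurable f :=
    hcmeas.add <| Finset.measurable_sum _ fun i _ =>
      (measurable_one.indicator (measurableSet_linfBall _ _)).const_mul _
  have hS : MeasurableSet S := MeasurableSet.iUnion fun i => measurableSet_linfBall _ t
  have hf_off : EqOn f cfun Sᶜ := fun x hx => by
    rw [mem_compl_iff, mem_iUnion, not_exists] at hx
    simp [f, indicator_of_notMem, hx]
  have hS_le : (PX P).real S ≤ m * (c * r) := by
    refine (hA.measureReal_iUnion_linfBall_le hxs ht.1).trans ?_
    rw [Fintype.card_fin]
    gcongr
    exacts [hA.1.le, ht.2]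
  calc Risk L P f - BayesRisk L P
      = (Risk L P cfun - BayesRisk L P) + (Risk L P f - Risk L P cfun) := by ring
    _ ≤ (Risk L P cfun - BayesRisk L P) + M * (PX P).real S := by
        gcongr
        exact hL.risk_sub_risk_le hsupp hf hcmeas (fun x hx => (hrange x hx).1)
          (fun x hx => (hrange x hx).2) hS hf_off
    _ ≤ (Risk L P cfun - BayesRisk L P) + m * M * c * r := by
        linarith [mul_le_mul_of_nonneg_left hS_le hM]

/-- excess risk bound for properly aligned inflated histograms. -/
theorem statement13 (d m : ℕ) (hd : 1 ≤ d) (L : ℝ → ℝ → ℝ) (Y : Set ℝ) (M : ℝ)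
    (hLYM : (L = Lls ∧ Y = Set.Icc (-1 : ℝ) 1 ∧ M = 8) ∨
            (L = Lhinge ∧ Y = ({-1, 1} : Set ℝ) ∧ M = 2) ∨
            (L = Lclass ∧ Y = ({-1, 1} : Set ℝ) ∧ M = 1))
    (P : Measure (E d × ℝ)) [IsProbabilityMeasure P] (hsupp : SuppXY P Y)
    (c : ℝ) (hA : AssumptionA P c)
    (s r t : ℝ) (hs : s ∈ Set.Ioc (0 : ℝ) 1) (hr : 0 < r) (ht : t ∈ Set.Icc 0 r)
    (off : E d) (cfun : E d → ℝ) (hconst : ConstOnCells off s cfun)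
    (hcY : ∀ x ∈ Xcube d, cfun x ∈ Y) (hcmeas : Measurable cfun)
    (xs : Fin m → E d) (hxs : ∀ i, xs i ∈ Xcube d)
    (b : Fin m → ℝ) (hb : ∀ i, b i = 0 ∨ ∃ y ∈ Y, b i = 2 * y)
    (halign : ∀ i, linfBall (xs i) t ⊆ cell off s (xs i))
    (hdisj : ∀ i j, i ≠ j → Disjoint (linfBall (xs i) t) (linfBall (xs j) t))
    (hrange : ∀ x ∈ Xcube d,
      (cfun x + ∑ i, b i * (linfBall (xs i) t).indicator 1 x) ∈ Set.Icc (-1 : ℝ) 1 ∧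
      cfun x ∈ Set.Icc (-1 : ℝ) 1) :
    Risk L P (fun x => cfun x + ∑ i, b i * (linfBall (xs i) t).indicator 1 x) -
        BayesRisk L P ≤
      (Risk L P cfun - BayesRisk L P) + m * M * c * r :=
  statement13_general d m L Y M hLYM P hsupp c hA r t ht cfun hcmeas xs hxs b hrange

end Pantry
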